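/- arXiv:1604.03617 — 2 statements merged into one kernel-verified Lean document; each statement's English description precedes it below -/
import Mathlib

section
/- Let α ∈ 𝔽_q*, 1 ≤ k ≤ n−1, and let g(x) = ∑_{i=0}^{k} a_i x^i with a_k = 1 be a right divisor of x^n − α in 𝔽_q[x;θ]. Let T_g be the k×k companion matrix of g (with entry 1 in positions (i, i+1) for 0 ≤ i ≤ k−2, last row (−a_0, −a_1, ..., −a_{k−1}), and zeros elsewhere), let τ(v) = (θ(v_0), ..., θ(v_{k−1}))·T_g, and let P = (1, 0, ..., 0) ∈ 𝔽_q^k. Then a linear code C ⊆ 𝔽_q^n is the code generated by g(x) (the 𝔽_q-span of the vectors v_0, ..., v_{n−k−1}, where v_j has entry θ^j(a_i) in position i+j and 0 elsewhere) if and only if C = {(c_0, ..., c_{n−1}) ∈ 𝔽_q^n : ∑_{i=0}^{n−1} c_i·τ^i(P) = 0}; in particular, this code is a skew (α,θ)-cyclic code of dimension n − k. -/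
/-! Write `sₘ = τ^m(P)`. The companion matrix gives `sₘ = eₘ` for `m < k` and
`s_k = -(a₀, …, a_{k-1})`, so `∑ aₘ sₘ = 0`; since `τ` is `θ`-semilinear, applying it `i` times
shows that the syndrome `c ↦ ∑ cₘ sₘ` vanishes on the coefficient vector of every `xⁱ g(x)`.
The syndrome maps onto `F^k`, so its kernel has dimension `n - k`, as does the span of the
triangular family `x^j g(x)`, `j < n - k`; hence the two codes coincide. Finally
`x^n - α = t(x) g(x)` gives `sₙ = α s₀`, which makes the syndrome of the skew shift of `c` equal to
`τ` of the syndrome of `c`, so the kernel is skew cyclic. -/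

/-- The skew constacyclic shift `φ_{α,θ}`. -/
def skewShift (n : ℕ) [NeZero n] {F : Type*} [Field F] (θ : F ≃+* F) (α : F)
    (c : Fin n → F) : Fin n → F :=
  fun i => (if i = 0 then α else 1) * θ (c (i - 1))

/-- `genVec n θ a j` is the coefficient vector of `x^j · a(x)` in `𝔽_q[x;θ]`:
it has entry `θ^j(a_i)` in position `i + j` and `0` in positions `< j`. -/
def genVec (n : ℕ) {F : Type*} [Field F] (θ : F ≃+* F) (a : ℕ → F) (j : ℕ) :
    Fin n → F :=
  fun idx => if j ≤ idx.val then (⇑θ)^[j] (a (idx.val - j)) else 0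

/-- The θ-semilinear map `τ(v) = (θ(v_0), …, θ(v_{k-1}))·T` attached to a
matrix `T`. -/
def tauMap {k : ℕ} {F : Type*} [Field F] (θ : F ≃+* F)
    (T : Matrix (Fin k) (Fin k) F) : (Fin k → F) → (Fin k → F) :=
  fun v => Matrix.vecMul (fun i => θ (v i)) T

/-- The `k×k` companion matrix of the monic polynomial with coefficients
`a_0, …, a_{k-1}, 1`: entry `1` in positions `(i, i+1)` for `0 ≤ i ≤ k-2`,
last row `(-a_0, …, -a_{k-1})`, zeros elsewhere. -/
def compMat (k : ℕ) {F : Type*} [Field F] (a : ℕ → F) :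
    Matrix (Fin k) (Fin k) F :=
  Matrix.of fun i j => if i.val = k - 1 then -a j.val
    else if j.val = i.val + 1 then 1 else 0

section Tau

variable {F : Type*} [Field F] (θ : F ≃+* F) {k : ℕ} (T : Matrix (Fin k) (Fin k) F)

def tauSemilinear : (Fin k → F) →ₛₗ[(θ : F →+* F)] (Fin k → F) where
  toFun := tauMap θ T
  map_add' v w := by
    simp only [tauMap, Pi.add_apply, map_add]
    exact Matrix.add_vecMul _ _ _
  map_smul' x v := by
    ext j
    simp [tauMap, Matrix.vecMul, dotProduct, Finset.mul_sum, mul_assoc]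

@[simp]
lemma tauSemilinear_apply (v : Fin k → F) : tauSemilinear θ T v = tauMap θ T v := rfl

lemma tauMap_indicator {m : ℕ} (hm : m < k) :
    tauMap θ T (fun i => if i.val = m then 1 else 0) = T ⟨m, hm⟩ := by
  ext j
  simp only [tauMap, Matrix.vecMul, dotProduct, apply_ite θ, map_one, map_zero, ite_mul,
    one_mul, zero_mul]
  rw [Finset.sum_eq_single ⟨m, hm⟩] <;> simp_all [Fin.ext_iff]

end Tau

section CompanionOrbit

variable {F : Type*} [Field F] (θ : F ≃+* F) (a : ℕ → F) {k : ℕ}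

def companionOrbit (k m : ℕ) : Fin k → F :=
  (tauMap θ (compMat k a))^[m] (fun j => if j.val = 0 then 1 else 0)

lemma companionOrbit_succ (m : ℕ) :
    companionOrbit θ a k (m + 1) = tauMap θ (compMat k a) (companionOrbit θ a k m) :=
  Function.iterate_succ_apply' _ _ _

lemma companionOrbit_of_lt {m : ℕ} (hm : m < k) :
    companionOrbit θ a k m = fun j => if j.val = m then 1 else 0 := by
  induction m with
  | zero => rfl
  | succ m ih =>
    rw [companionOrbit_succ, ih (by omega), tauMap_indicator θ _ (by omega)]
    ext j
    simp [compMat, show m ≠ k - 1 by omega]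

lemma companionOrbit_self (hk : 1 ≤ k) : companionOrbit θ a k k = fun j : Fin k => -a j := by
  obtain ⟨m, rfl⟩ : ∃ m, k = m + 1 := ⟨k - 1, by omega⟩
  rw [companionOrbit_succ, companionOrbit_of_lt θ a (Nat.lt_succ_self m),
    tauMap_indicator θ _ (Nat.lt_succ_self m)]
  ext j
  simp [compMat]

lemma sum_smul_companionOrbit_eq_zero (hk : 1 ≤ k) (hamonic : a k = 1) :
    ∑ m ∈ Finset.range (k + 1), a m • companionOrbit θ a k m = 0 := by
  rw [Finset.sum_range_succ, hamonic, one_smul, companionOrbit_self θ a hk]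
  ext j
  rw [Pi.add_apply, Finset.sum_apply, Finset.sum_eq_single j.val]
  · simp [companionOrbit_of_lt θ a j.isLt]
  · intro m hm hmj
    simp [companionOrbit_of_lt θ a (Finset.mem_range.mp hm), Ne.symm hmj]
  · simp

end CompanionOrbit

section ShiftedCoeff

variable {F : Type*} [Field F] (θ : F ≃+* F) (a : ℕ → F) {k : ℕ}

/-- The coefficient of `x^j` in `x^i · a(x)` in `F[x; θ]`. -/
def shiftedCoeff (i j : ℕ) : F := if i ≤ j then (⇑θ)^[i] (a (j - i)) else 0

lemma shiftedCoeff_zero_left (j : ℕ) : shiftedCoeff θ a 0 j = a j := by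
  simp [shiftedCoeff]

lemma shiftedCoeff_succ_zero (i : ℕ) : shiftedCoeff θ a (i + 1) 0 = 0 := by
  simp [shiftedCoeff]

lemma shiftedCoeff_succ_succ (i j : ℕ) :
    shiftedCoeff θ a (i + 1) (j + 1) = θ (shiftedCoeff θ a i j) := by
  simp only [shiftedCoeff, Nat.add_le_add_iff_right, Nat.add_sub_add_right, apply_ite θ,
    map_zero, Function.iterate_succ_apply']

lemma shiftedCoeff_add_self (hamonic : a k = 1) (i : ℕ) : shiftedCoeff θ a i (k + i) = 1 := by
  simp [shiftedCoeff, hamonic, iterate_map_one]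

lemma shiftedCoeff_eq_zero_of_lt (hatop : ∀ i, k < i → a i = 0) {i j : ℕ} (hij : k + i < j) :
    shiftedCoeff θ a i j = 0 := by
  simp [shiftedCoeff, hatop (j - i) (by omega), iterate_map_zero]

lemma genVec_apply {n : ℕ} (j : ℕ) (l : Fin n) : genVec n θ a j l = shiftedCoeff θ a j l := rfl

lemma sum_shiftedCoeff_smul_companionOrbit_eq_zero (hk : 1 ≤ k) (hamonic : a k = 1)
    (hatop : ∀ i, k < i → a i = 0) (i : ℕ) {N : ℕ} (hN : i + k < N) :
    ∑ j ∈ Finset.range N, shiftedCoeff θ a i j • companionOrbit θ a k j = 0 := by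
  induction i generalizing N with
  | zero =>
    simp only [shiftedCoeff_zero_left]
    rw [Finset.eventually_constant_sum (N := k + 1) (fun j hj => by simp [hatop j hj]) (by omega)]
    exact sum_smul_companionOrbit_eq_zero θ a hk hamonic
  | succ i ih =>
    obtain ⟨N, rfl⟩ : ∃ M, N = M + 1 := ⟨N - 1, by omega⟩
    rw [Finset.sum_range_succ', shiftedCoeff_succ_zero, zero_smul, add_zero]
    calc ∑ j ∈ Finset.range N, shiftedCoeff θ a (i + 1) (j + 1) • companionOrbit θ a k (j + 1)
        = tauSemilinear θ (compMat k a)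
            (∑ j ∈ Finset.range N, shiftedCoeff θ a i j • companionOrbit θ a k j) := by
          simp only [map_sum, map_smulₛₗ, shiftedCoeff_succ_succ, companionOrbit_succ]
          rfl
      _ = 0 := by rw [ih (by omega), map_zero]

lemma linearIndependent_genVec {n : ℕ} (hamonic : a k = 1) (hatop : ∀ i, k < i → a i = 0) :
    LinearIndependent F fun j : Fin (n - k) => genVec n θ a j := by
  classical
  rw [Fintype.linearIndependent_iff]
  by_contra! hdep
  obtain ⟨g, hg, hne⟩ := hdep
  -- at position `k + j`, for the largest `j` with `g j ≠ 0`, only `x^j a(x)` contributes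
  obtain ⟨j, hj, hmax⟩ := (Finset.univ.filter (g · ≠ 0)).exists_max_image Fin.val
    (by simpa [Finset.filter_nonempty_iff] using hne)
  have hcoord := congr_fun hg ⟨k + j, by omega⟩
  rw [Finset.sum_apply, Finset.sum_eq_single j] at hcoord
  · simp only [Pi.smul_apply, genVec_apply, shiftedCoeff_add_self θ a hamonic, smul_eq_mul,
      mul_one, Pi.zero_apply] at hcoord
    simp [hcoord] at hj
  · intro i _ hij
    rcases lt_or_gt_of_ne (Fin.val_ne_of_ne hij) with hlt | hgt
    · rw [Pi.smul_apply, genVec_apply, shiftedCoeff_eq_zero_of_lt θ a hatop (by simp; omega),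
        smul_zero]
    · have hgi : g i = 0 := by
        by_contra hgi
        exact absurd (hmax i (by simpa using hgi)) (by omega)
      rw [hgi, zero_smul, Pi.zero_apply]
  · simp

end ShiftedCoeff

section RightDivisor

variable {F : Type*} [Field F] (θ : F ≃+* F) (a : ℕ → F) {k : ℕ}

lemma sum_mul_shiftedCoeff_eq {N j : ℕ} (hj : j ≤ N) (t : ℕ → F) :
    ∑ i ∈ Finset.range (N + 1), t i * shiftedCoeff θ a i j =
      ∑ i ∈ Finset.range (j + 1), t i * (⇑θ)^[i] (a (j - i)) := by
  rw [← Finset.sum_subset (Finset.range_subset_range.mpr (by omega : j + 1 ≤ N + 1))]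
  · refine Finset.sum_congr rfl fun i hi => ?_
    rw [shiftedCoeff, if_pos (by simp at hi; omega)]
  · intro i _ hi
    rw [shiftedCoeff, if_neg (by simp at hi; omega), mul_zero]

/-- Pair `x^n - α = ∑ tᵢ xⁱ a(x)` coefficientwise with the orbit: each `xⁱ a(x)` gives `0`. -/
lemma companionOrbit_eq_smul_of_rightDvd (hk : 1 ≤ k) (hamonic : a k = 1)
    (hatop : ∀ i, k < i → a i = 0) {n : ℕ} (hn : n ≠ 0) (hkn : k ≤ n) {α : F} (t : ℕ → F)
    (ht0 : ∀ i, n - k < i → t i = 0)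
    (ht : ∀ j ≤ n, ∑ i ∈ Finset.range (j + 1), t i * (⇑θ)^[i] (a (j - i)) =
      if j = n then 1 else if j = 0 then -α else 0) :
    companionOrbit θ a k n = α • companionOrbit θ a k 0 := by
  rw [← sub_eq_zero]
  calc companionOrbit θ a k n - α • companionOrbit θ a k 0
      = ∑ j ∈ Finset.range (n + 1),
          (if j = n then 1 else if j = 0 then -α else 0) • companionOrbit θ a k j := by
        rw [Finset.sum_range_succ, if_pos rfl, one_smul, Finset.sum_eq_single 0]
        · rw [if_neg (Ne.symm hn), if_pos rfl, neg_smul, sub_eq_add_neg, add_comm]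
        · intro j hj hj0
          rw [if_neg (by simp at hj; omega), if_neg hj0, zero_smul]
        · simp [Nat.pos_of_ne_zero hn]
    _ = ∑ j ∈ Finset.range (n + 1), ∑ i ∈ Finset.range (n + 1),
          t i • (shiftedCoeff θ a i j • companionOrbit θ a k j) := by
        refine Finset.sum_congr rfl fun j hj => ?_
        have hjn : j ≤ n := by simp at hj; omega
        rw [← ht j hjn, ← sum_mul_shiftedCoeff_eq θ a hjn, Finset.sum_smul]
        simp only [smul_smul]
    _ = ∑ i ∈ Finset.range (n + 1), t i •
          ∑ j ∈ Finset.range (n + 1), shiftedCoeff θ a i j • companionOrbit θ a k j := by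
        rw [Finset.sum_comm]
        simp only [Finset.smul_sum]
    _ = 0 := by
        refine Finset.sum_eq_zero fun i _ => ?_
        by_cases hi : i ≤ n - k
        · rw [sum_shiftedCoeff_smul_companionOrbit_eq_zero θ a hk hamonic hatop i (by omega),
            smul_zero]
        · rw [ht0 i (by omega), zero_smul]

end RightDivisor

section Syndrome

variable {F : Type*} [Field F] (θ : F ≃+* F) (a : ℕ → F)

def syndrome (n k : ℕ) : (Fin n → F) →ₗ[F] (Fin k → F) :=
  Fintype.linearCombination F fun i : Fin n => companionOrbit θ a k i

variable {n k : ℕ}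

lemma syndrome_apply (c : Fin n → F) :
    syndrome θ a n k c = ∑ i : Fin n, c i • companionOrbit θ a k i :=
  Fintype.linearCombination_apply F _ c

lemma syndrome_genVec (hk : 1 ≤ k) (hamonic : a k = 1) (hatop : ∀ i, k < i → a i = 0)
    {j : ℕ} (hj : j + k < n) : syndrome θ a n k (genVec n θ a j) = 0 := by
  rw [syndrome_apply]
  exact (Fin.sum_univ_eq_sum_range (fun m => shiftedCoeff θ a j m • companionOrbit θ a k m) n).trans
    (sum_shiftedCoeff_smul_companionOrbit_eq_zero θ a hk hamonic hatop j hj)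

lemma syndrome_surjective (hkn : k ≤ n) : Function.Surjective (syndrome θ a n k) := by
  rw [← LinearMap.range_eq_top, syndrome, Fintype.range_linearCombination, eq_top_iff,
    ← (Pi.basisFun F (Fin k)).span_eq]
  refine Submodule.span_mono ?_
  rintro _ ⟨j, rfl⟩
  refine ⟨⟨j, by omega⟩, ?_⟩
  ext i
  simp [companionOrbit_of_lt θ a j.isLt, Pi.single_apply, Fin.ext_iff]

lemma finrank_ker_syndrome (hkn : k ≤ n) :
    Module.finrank F (LinearMap.ker (syndrome θ a n k)) = n - k := by
  have h := LinearMap.finrank_range_add_finrank_ker (syndrome θ a n k)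
  rw [LinearMap.range_eq_top.mpr (syndrome_surjective θ a hkn), finrank_top,
    Module.finrank_fin_fun, Module.finrank_fin_fun] at h
  omega

lemma syndrome_skewShift [NeZero n] {α : F}
    (hα : companionOrbit θ a k n = α • companionOrbit θ a k 0) (c : Fin n → F) :
    syndrome θ a n k (skewShift n θ α c) = tauMap θ (compMat k a) (syndrome θ a n k c) := by
  obtain ⟨m, rfl⟩ : ∃ m, n = m + 1 := ⟨n - 1, (Nat.succ_pred_eq_of_ne_zero (NeZero.ne n)).symm⟩
  rw [← tauSemilinear_apply, syndrome_apply, syndrome_apply, map_sum, Fin.sum_univ_succ,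
    Fin.sum_univ_castSucc, add_comm]
  simp only [map_smulₛₗ, tauSemilinear_apply, ← companionOrbit_succ, skewShift]
  congr 1
  · refine Fintype.sum_congr _ _ fun i => ?_
    have hpred : i.succ - 1 = i.castSucc := by rw [← Fin.coeSucc_eq_succ, add_sub_cancel_right]
    rw [if_neg (Fin.succ_ne_zero i), one_mul, hpred, Fin.val_succ, Fin.val_castSucc]
    rfl
  · have hpred : (0 : Fin (m + 1)) - 1 = Fin.last m := by
      rw [← Fin.last_add_one, add_sub_cancel_right]
    rw [if_pos trivial, hpred, Fin.val_last, Fin.val_zero, hα, smul_smul, mul_comm]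
    rfl

end Syndrome

theorem stmt_7_general {n k : ℕ} [NeZero n] (hk : 1 ≤ k) (hkn : k ≤ n - 1)
    {F : Type*} [Field F]
    (θ : F ≃+* F) (α : F)
    (a : ℕ → F) (hatop : ∀ i, k < i → a i = 0) (hamonic : a k = 1)
    (hdvd : ∃ t : ℕ → F, (∀ i, n - k < i → t i = 0) ∧
      ∀ j ≤ n, ∑ i ∈ Finset.range (j + 1), t i * (⇑θ)^[i] (a (j - i)) =
        if j = n then 1 else if j = 0 then -α else 0) :
    (∀ C : Submodule F (Fin n → F),
      (C : Set (Fin n → F)) =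
        ((Submodule.span F {v : Fin n → F | ∃ j < n - k, v = genVec n θ a j} :
          Submodule F (Fin n → F)) : Set (Fin n → F)) ↔
      (C : Set (Fin n → F)) =
        {c : Fin n → F | ∑ i : Fin n,
          c i • (tauMap θ (compMat k a))^[(i : ℕ)]
            (fun j : Fin k => if j.val = 0 then 1 else 0) = 0}) ∧
    (∀ c ∈ (Submodule.span F {v : Fin n → F | ∃ j < n - k, v = genVec n θ a j} :
        Submodule F (Fin n → F)),
      skewShift n θ α c ∈
        (Submodule.span F {v : Fin n → F | ∃ j < n - k, v = genVec n θ a j} :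
          Submodule F (Fin n → F))) ∧
    Module.finrank F
      (Submodule.span F {v : Fin n → F | ∃ j < n - k, v = genVec n θ a j} :
        Submodule F (Fin n → F)) = n - k := by
  obtain ⟨t, ht0, ht⟩ := hdvd
  set G := Submodule.span F {v : Fin n → F | ∃ j < n - k, v = genVec n θ a j}
  have hG : G = Submodule.span F (Set.range fun j : Fin (n - k) => genVec n θ a j) := by
    refine congrArg (Submodule.span F) (Set.ext fun v => ?_)
    exact ⟨fun ⟨j, hj, hv⟩ => ⟨⟨j, hj⟩, hv.symm⟩, fun ⟨j, hv⟩ => ⟨j, j.isLt, hv.symm⟩⟩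
  have hfinrank : Module.finrank F G = n - k := by
    rw [hG, finrank_span_eq_card (linearIndependent_genVec θ a hamonic hatop), Fintype.card_fin]
  have hker : G = LinearMap.ker (syndrome θ a n k) := by
    refine Submodule.eq_of_le_of_finrank_le (Submodule.span_le.mpr ?_)
      (by rw [finrank_ker_syndrome θ a (by omega), hfinrank])
    rintro _ ⟨j, hj, rfl⟩
    exact syndrome_genVec θ a hk hamonic hatop (by omega)
  have hperiodic := companionOrbit_eq_smul_of_rightDvd θ a hk hamonic hatop (NeZero.ne n)
    (by omega) t ht0 ht
  refine ⟨fun C => ?_, fun c hc => ?_, hfinrank⟩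
  · rw [hker]
    rfl
  · rw [hker, LinearMap.mem_ker] at hc ⊢
    rw [syndrome_skewShift θ a hperiodic, hc]
    exact map_zero (tauSemilinear θ (compMat k a))

/-- with `g(x) = ∑_{i=0}^k a_i x^i` monic, a right divisor of
`x^n - α` in `𝔽_q[x;θ]`, `τ = Θ ∘ T_g` and `P = (1,0,…,0)`, a linear code
`C ⊆ 𝔽_q^n` equals the code generated by `g(x)` iff
`C = {c : ∑ c_i·τ^i(P) = 0}`; in particular, this code is a skew
`(α,θ)`-cyclic code of dimension `n - k`. -/
theorem stmt_7 {n k : ℕ} [NeZero n] (hk : 1 ≤ k) (hkn : k ≤ n - 1)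
    {F : Type*} [Field F] [Fintype F]
    (θ : F ≃+* F) (α : F) (hα : α ≠ 0)
    (a : ℕ → F) (hatop : ∀ i, k < i → a i = 0) (hamonic : a k = 1)
    (hdvd : ∃ t : ℕ → F, (∀ i, n - k < i → t i = 0) ∧
      ∀ j ≤ n, ∑ i ∈ Finset.range (j + 1), t i * (⇑θ)^[i] (a (j - i)) =
        if j = n then 1 else if j = 0 then -α else 0) :
    (∀ C : Submodule F (Fin n → F),
      (C : Set (Fin n → F)) =
        ((Submodule.span F {v : Fin n → F | ∃ j < n - k, v = genVec n θ a j} :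
          Submodule F (Fin n → F)) : Set (Fin n → F)) ↔
      (C : Set (Fin n → F)) =
        {c : Fin n → F | ∑ i : Fin n,
          c i • (tauMap θ (compMat k a))^[(i : ℕ)]
            (fun j : Fin k => if j.val = 0 then 1 else 0) = 0}) ∧
    (∀ c ∈ (Submodule.span F {v : Fin n → F | ∃ j < n - k, v = genVec n θ a j} :
        Submodule F (Fin n → F)),
      skewShift n θ α c ∈
        (Submodule.span F {v : Fin n → F | ∃ j < n - k, v = genVec n θ a j} :
          Submodule F (Fin n → F))) ∧
    Module.finrank F
      (Submodule.span F {v : Fin n → F | ∃ j < n - k, v = genVec n θ a j} :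
        Submodule F (Fin n → F)) = n - k :=
  stmt_7_general hk hkn θ α a hatop hamonic hdvd
end

section
/- Let p be a prime, t ≥ 2, 1 ≤ s ≤ t−1, q = p^t, and let θ be the automorphism of 𝔽_q given by θ(a) = a^{p^s}. Let f_0, ..., f_k ∈ 𝔽_q with f_k ≠ 0 and let n > k. Let C ⊆ 𝔽_q^n be the code generated by f(t) = ∑_{i=0}^{k} f_i t^i in 𝔽_q[t;θ], and let C^{[]_s} ⊆ 𝔽_q^{[n]_s} be the code generated by the [p^s]-polynomial f^{[]_s}(X) = ∑_{i=0}^{k} f_i·X^{[i]_s} in 𝔽_q[X], i.e., the 𝔽_q-span of the coefficient vectors of X^j·f^{[]_s}(X) for 0 ≤ j ≤ [n]_s − 1 − [k]_s. Then d(C^{[]_s}) ≤ d(C), i.e., the minimum Hamming weight of a nonzero codeword of C^{[]_s} is at most the minimum Hamming weight of a nonzero codeword of C. -/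
/-!
Spread a word `c ∈ 𝔽_q^n` to the word of length `[n]_s` that carries `c_m` at position `[m]_s`
and `0` elsewhere; this is linear and preserves Hamming weight. Since `θ^j` is the Frobenius
power `a ↦ a^{(p^s)^j}` and `[i + j]_s = [j]_s + (p^s)^j [i]_s`, the spread of `t^j f(t)` is the
coefficient vector of `X^{[j]_s} (f^{[]_s})^{(p^s)^j}` (Frobenius is additive on `𝔽_q[X]`). This
is `f^{[]_s}` times a cofactor of degree `[j]_s + ((p^s)^j - 1)[k]_s = [j + k]_s - [k]_s`, which is
below `[n]_s - [k]_s` because `j + k < n`, so it lies in `C^{[]_s}`. Hence a minimum-weight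
codeword of `C` spreads to a nonzero codeword of `C^{[]_s}` of the same weight.
-/

/-- `br p s i = [i]_s = 1 + p^s + p^{2s} + ⋯ + p^{(i-1)s} = ((p^s)^i - 1)/(p^s - 1)`. -/
def br (p s i : ℕ) : ℕ := ∑ j ∈ Finset.range i, (p ^ s) ^ j

/-- The minimum Hamming distance of a (nonzero) linear code: the minimum
Hamming weight of a nonzero codeword. -/
noncomputable def minDist {n : ℕ} {F : Type*} [Field F] [DecidableEq F]
    (C : Set (Fin n → F)) : ℕ :=
  sInf {d | ∃ c ∈ C, c ≠ 0 ∧ hammingNorm c = d}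

open Polynomial Finset

section Bracket

variable {p : ℕ} (s : ℕ)

lemma br_add (i j : ℕ) : br p s (i + j) = br p s i + (p ^ s) ^ i * br p s j := by
  simp only [br, sum_range_add, mul_sum, pow_add]

lemma br_strictMono (hp : 0 < p) : StrictMono (br p s) :=
  strictMono_nat_of_lt_succ fun i => by
    simp only [br, sum_range_succ, lt_add_iff_pos_right]
    positivity

def brEmb (hp : 0 < p) (n : ℕ) : Fin n → Fin (br p s n) :=
  fun m => ⟨br p s m, br_strictMono s hp m.isLt⟩

lemma brEmb_injective (hp : 0 < p) (n : ℕ) : Function.Injective (brEmb s hp n) :=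
  fun _ _ h => Fin.ext ((br_strictMono s hp).injective (Fin.mk.inj_iff.mp h))

end Bracket

section Hamming

lemma hammingNorm_extend_zero {ι κ M : Type*} [Fintype ι] [Fintype κ] [Zero M] [DecidableEq M]
    {e : ι → κ} (he : Function.Injective e) (c : ι → M) :
    hammingNorm (Function.extend e c 0) = hammingNorm c := by
  have hsupp : univ.filter (fun b => Function.extend e c 0 b ≠ 0) =
      (univ.filter fun a => c a ≠ 0).map ⟨e, he⟩ := by
    ext b
    by_cases hb : ∃ a, e a = b
    · obtain ⟨a, rfl⟩ := hb
      simp [he.extend_apply]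
    · simp only [mem_filter, mem_univ, true_and, mem_map, Function.Embedding.coeFn_mk]
      rw [Function.extend_apply' _ _ _ hb]
      simp only [Pi.zero_apply, ne_eq, not_true_eq_false, false_iff, not_exists, not_and]
      exact fun a _ h => hb ⟨a, h⟩
  simp only [hammingNorm, hsupp, card_map]

lemma minDist_le_of_mapsTo {F : Type*} [Field F] [DecidableEq F] {n m : ℕ}
    {C : Set (Fin n → F)} {D : Set (Fin m → F)} (Ψ : (Fin n → F) → Fin m → F)
    (hΨ : Set.MapsTo Ψ C D)
    (hwt : ∀ c ∈ C, hammingNorm (Ψ c) = hammingNorm c) (hC : ∃ c ∈ C, c ≠ 0) :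
    minDist D ≤ minDist C := by
  unfold minDist
  obtain ⟨c₀, hc₀, hc₀0⟩ := hC
  have hne : {d | ∃ c ∈ C, c ≠ 0 ∧ hammingNorm c = d}.Nonempty := ⟨_, c₀, hc₀, hc₀0, rfl⟩
  obtain ⟨c, hc, hc0, hcwt⟩ := Nat.sInf_mem hne
  have hΨc : Ψ c ≠ 0 := by
    rwa [← hammingNorm_ne_zero_iff, hwt c hc, hammingNorm_ne_zero_iff]
  calc sInf {d | ∃ u ∈ D, u ≠ 0 ∧ hammingNorm u = d} ≤ hammingNorm (Ψ c) :=
        Nat.sInf_le ⟨Ψ c, hΨ hc, hΨc, rfl⟩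
    _ = _ := by rw [hwt c hc, hcwt]

end Hamming

section Polynomial

variable {R : Type*} [CommRing R]

noncomputable def coeffVec (N : ℕ) : R[X] →ₗ[R] Fin N → R :=
  LinearMap.pi fun i => lcoeff R i

lemma coeffVec_mul_mem_span (N M : ℕ) (h : R[X]) {g : R[X]} (hg : g.natDegree < M) :
    coeffVec N (g * h) ∈
      Submodule.span R {u | ∃ j < M, u = coeffVec N (X ^ j * h)} := by
  rw [as_sum_range' g M hg, sum_mul, map_sum]
  refine Submodule.sum_mem _ fun j hj => ?_
  rw [← C_mul_X_pow_eq_monomial, mul_assoc, ← smul_eq_C_mul, map_smul]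
  exact Submodule.smul_mem _ _ (Submodule.subset_span ⟨j, mem_range.mp hj, rfl⟩)

variable (p s : ℕ)

/-- `qPoly p s f (k + 1)` is the `[p^s]`-polynomial `f^{[]_s}(X) = ∑_{i ≤ k} f_i X^{[i]_s}`. -/
noncomputable def qPoly (a : ℕ → R) (M : ℕ) : R[X] :=
  ∑ i ∈ range M, C (a i) * X ^ br p s i

lemma natDegree_qPoly_le (hp : 0 < p) (a : ℕ → R) (M : ℕ) :
    (qPoly p s a (M + 1)).natDegree ≤ br p s M :=
  natDegree_sum_le_of_forall_le _ _ fun _ hi => (natDegree_C_mul_X_pow_le _ _).trans <|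
    (br_strictMono s hp).monotone (Nat.lt_succ_iff.mp (mem_range.mp hi))

lemma coeff_qPoly_br (hp : 0 < p) (a : ℕ → R) (M m : ℕ) :
    (qPoly p s a M).coeff (br p s m) = if m < M then a m else 0 := by
  simp only [qPoly, finsetSum_coeff, coeff_C_mul_X_pow, (br_strictMono s hp).injective.eq_iff,
    sum_ite_eq, mem_range]

lemma coeff_qPoly_of_forall_ne (a : ℕ → R) (M d : ℕ) (hd : ∀ m, br p s m ≠ d) :
    (qPoly p s a M).coeff d = 0 := by
  simp [qPoly, finsetSum_coeff, fun m => (hd m).symm]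

lemma extend_brEmb_eq_coeffVec (hp : 0 < p) {n M : ℕ} (a : ℕ → R)
    (ha : ∀ m, M ≤ m → a m = 0) :
    Function.extend (brEmb s hp n) (fun m => a m) 0 = coeffVec (br p s n) (qPoly p s a M) := by
  funext d
  change _ = (qPoly p s a M).coeff d
  by_cases hd : ∃ m, brEmb s hp n m = d
  · obtain ⟨m, rfl⟩ := hd
    rw [(brEmb_injective s hp n).extend_apply]
    change _ = (qPoly p s a M).coeff (br p s m)
    rw [coeff_qPoly_br p s hp]
    split_ifs with hm
    · rfl
    · exact ha m (not_lt.mp hm)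
  · rw [Function.extend_apply' _ _ _ hd, coeff_qPoly_of_forall_ne]
    · rfl
    · intro m hm
      have hmn : m < n := (br_strictMono s hp).lt_iff_lt.mp (hm ▸ d.isLt)
      exact hd ⟨⟨m, hmn⟩, Fin.ext hm⟩

lemma X_pow_br_mul_qPoly_pow [CharP R p] (hp : p.Prime) (a : ℕ → R) (M j : ℕ) :
    X ^ br p s j * qPoly p s a M ^ (p ^ s) ^ j =
      qPoly p s (fun m => if j ≤ m then a (m - j) ^ (p ^ s) ^ j else 0) (j + M) := by
  have : ExpChar R[X] p := .prime hp
  rw [qPoly, qPoly, sum_range_add, ← pow_mul, sum_pow_char_pow, mul_sum,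
    sum_eq_zero (s := range j) fun m hm => by simp [(mem_range.mp hm).not_ge], zero_add]
  refine sum_congr rfl fun i _ => ?_
  rw [if_pos (Nat.le_add_right j i), Nat.add_sub_cancel_left, br_add, pow_mul, mul_pow, ← C_pow,
    ← pow_mul, pow_add]
  ring

end Polynomial

section SkewCode

variable {F : Type*} [Field F] {p s : ℕ}

lemma iterate_eq_pow (θ : F ≃+* F) (hθ : ∀ a, θ a = a ^ p ^ s) (j : ℕ) (a : F) :
    (⇑θ)^[j] a = a ^ (p ^ s) ^ j := by
  induction j generalizing a with
  | zero => simp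
  | succ j ih => rw [Function.iterate_succ_apply, ih, hθ, ← pow_mul, ← pow_succ']

lemma extend_genVec_mem_span [CharP F p] (hp : p.Prime) (θ : F ≃+* F)
    (hθ : ∀ a, θ a = a ^ p ^ s) {n k : ℕ} {f : ℕ → F} (hftop : ∀ i, k < i → f i = 0) {j : ℕ}
    (hj : j < n - k) :
    Function.extend (brEmb s hp.pos n) (genVec n θ f j) 0 ∈
      Submodule.span F {u | ∃ i < br p s n - br p s k,
        u = coeffVec (br p s n) (X ^ i * qPoly p s f (k + 1))} := by
  set E := (p ^ s) ^ j with hE_def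
  set P := qPoly p s f (k + 1)
  have hE : 0 < E := pow_pos (pow_pos hp.pos s) j
  have hvanish : ∀ m, j + (k + 1) ≤ m → (if j ≤ m then f (m - j) ^ E else 0) = 0 :=
    fun m hm => by rw [if_pos (by omega), hftop _ (by omega), zero_pow hE.ne']
  have hgenVec : genVec n θ f j = fun m : Fin n => if j ≤ m.val then f (m - j) ^ E else 0 := by
    funext m
    simp only [genVec, iterate_eq_pow θ hθ, hE_def]
  have hsplit : X ^ br p s j * P ^ E = (X ^ br p s j * P ^ (E - 1)) * P := by
    rw [mul_assoc, ← pow_succ, Nat.sub_add_cancel hE]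
  rw [hgenVec, extend_brEmb_eq_coeffVec p s hp.pos _ hvanish, ← X_pow_br_mul_qPoly_pow p s hp,
    hsplit]
  refine coeffVec_mul_mem_span _ _ _ ?_
  have hdeg : (X ^ br p s j * P ^ (E - 1)).natDegree ≤ br p s j + (E - 1) * br p s k :=
    natDegree_mul_le.trans <| add_le_add (natDegree_X_pow _).le <|
      natDegree_pow_le.trans (Nat.mul_le_mul_left _ (natDegree_qPoly_le p s hp.pos f k))
  have hlt : br p s (j + k) < br p s n := br_strictMono s hp.pos (by omega)
  rw [br_add, ← hE_def] at hlt
  have := Nat.sub_one_mul E (br p s k)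
  have := Nat.le_mul_of_pos_left (br p s k) hE
  omega

end SkewCode

theorem stmt_10_general {p t s : ℕ} (hp : p.Prime)
    {F : Type*} [Field F] [Fintype F] [DecidableEq F]
    (hF : Fintype.card F = p ^ t)
    (θ : F ≃+* F) (hθ : ∀ a : F, θ a = a ^ p ^ s)
    (n k : ℕ) (hkn : k < n)
    (f : ℕ → F) (hfk : f k ≠ 0) (hftop : ∀ i, k < i → f i = 0) :
    minDist ((Submodule.span F {u : Fin (br p s n) → F |
        ∃ j < br p s n - br p s k,
          u = fun idx : Fin (br p s n) =>
            (Polynomial.X ^ j *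
              ∑ i ∈ Finset.range (k + 1),
                Polynomial.C (f i) * Polynomial.X ^ br p s i).coeff idx.val} :
        Submodule F (Fin (br p s n) → F)) : Set (Fin (br p s n) → F)) ≤
    minDist ((Submodule.span F {v : Fin n → F | ∃ j < n - k, v = genVec n θ f j} :
        Submodule F (Fin n → F)) : Set (Fin n → F)) := by
  have : Fact p.Prime := ⟨hp⟩
  have : CharP F p := charP_of_card_eq_prime_pow hF
  set Ψ := Function.ExtendByZero.linearMap F (brEmb s hp.pos n)
  refine minDist_le_of_mapsTo Ψ (fun c hc => ?maps) (fun c _ => ?weight)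
    ⟨genVec n θ f 0, Submodule.subset_span ⟨0, by omega, rfl⟩, ?nonzero⟩
  case maps =>
    refine (Submodule.map_span_le Ψ _ _).mpr ?_ (Submodule.mem_map_of_mem hc)
    rintro _ ⟨j, hj, rfl⟩
    exact extend_genVec_mem_span hp θ hθ hftop hj
  case weight => exact hammingNorm_extend_zero (brEmb_injective s hp.pos n) c
  case nonzero => exact fun h => hfk (by simpa [genVec] using congrFun h ⟨k, hkn⟩)

/-- with `C` the code of length `n` generated by
`f(t) = ∑_{i=0}^k f_i t^i` in `𝔽_q[t;θ]` (`θ(a) = a^{p^s}`), and `C^{[]ₛ}` the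
code of length `[n]_s` generated by `f^{[]ₛ}(X) = ∑ f_i X^{[i]_s}` in `𝔽_q[X]`,
one has `d(C^{[]ₛ}) ≤ d(C)`. -/
theorem stmt_10 {p t s : ℕ} (hp : p.Prime) (ht : 2 ≤ t) (hs1 : 1 ≤ s)
    (hs2 : s ≤ t - 1)
    {F : Type*} [Field F] [Fintype F] [DecidableEq F]
    (hF : Fintype.card F = p ^ t)
    (θ : F ≃+* F) (hθ : ∀ a : F, θ a = a ^ p ^ s)
    (n k : ℕ) (hkn : k < n)
    (f : ℕ → F) (hfk : f k ≠ 0) (hftop : ∀ i, k < i → f i = 0) :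
    minDist ((Submodule.span F {u : Fin (br p s n) → F |
        ∃ j < br p s n - br p s k,
          u = fun idx : Fin (br p s n) =>
            (Polynomial.X ^ j *
              ∑ i ∈ Finset.range (k + 1),
                Polynomial.C (f i) * Polynomial.X ^ br p s i).coeff idx.val} :
        Submodule F (Fin (br p s n) → F)) : Set (Fin (br p s n) → F)) ≤
    minDist ((Submodule.span F {v : Fin n → F | ∃ j < n - k, v = genVec n θ f j} :
        Submodule F (Fin n → F)) : Set (Fin n → F)) :=
  stmt_10_general hp hF θ hθ n k hkn f hfk hftop
end
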